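/- Let (H, ⊳) be a right Post-Hopf algebra over a field K of characteristic zero. Then for all x ∈ H: x ⊳ 1 = x and 1 ⊳ x = ε(x)·1. -/
import Mathlib

open TensorProduct

namespace PostHopfAux

variable {K : Type*} [Field K] {H : Type*} [Ring H] [HopfAlgebra K H]

open Coalgebra HopfAlgebra

/-- Convolution product of linear endomorphisms of a Hopf algebra. -/
noncomputable def conv (f g : H →ₗ[K] H) : H →ₗ[K] H :=
  LinearMap.mul' K H ∘ₗ TensorProduct.map f g ∘ₗ Coalgebra.comul

/-- The convolution unit `x ↦ ε(x)·1`. -/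
noncomputable def eL : H →ₗ[K] H :=
  Algebra.linearMap K H ∘ₗ Coalgebra.counit

lemma lift_compl₁₂ (B : H →ₗ[K] H →ₗ[K] H) (f g : H →ₗ[K] H) :
    TensorProduct.lift (B.compl₁₂ f g) = TensorProduct.lift B ∘ₗ TensorProduct.map f g :=
  TensorProduct.ext' fun x y => by simp

lemma conv_apply (f g : H →ₗ[K] H) (x : H) :
    conv f g x
      = TensorProduct.lift ((LinearMap.mul K H).compl₁₂ f g) (Coalgebra.comul (R := K) x) := by
  rw [lift_compl₁₂]; rfl

lemma eL_apply (x : H) : (eL : H →ₗ[K] H) x = Coalgebra.counit (R := K) x • (1 : H) := by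
  simp [eL, Algebra.smul_def]

lemma eL_conv (f : H →ₗ[K] H) : conv eL f = f := by
  ext x
  calc conv (eL : H →ₗ[K] H) f x
      = (LinearMap.mul' K H)
          ((TensorProduct.map (Algebra.linearMap K H) f ∘ₗ
            (Coalgebra.counit (R := K)).rTensor H) (Coalgebra.comul x)) := by
        rw [LinearMap.map_comp_rTensor]; rfl
    _ = (LinearMap.mul' K H)
          (TensorProduct.map (Algebra.linearMap K H) f ((1 : K) ⊗ₜ x)) := by
        rw [LinearMap.comp_apply, Coalgebra.rTensor_counit_comul]
    _ = f x := by simp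

lemma conv_eL (f : H →ₗ[K] H) : conv f eL = f := by
  ext x
  calc conv f (eL : H →ₗ[K] H) x
      = (LinearMap.mul' K H)
          ((TensorProduct.map f (Algebra.linearMap K H) ∘ₗ
            (Coalgebra.counit (R := K)).lTensor H) (Coalgebra.comul x)) := by
        rw [LinearMap.map_comp_lTensor]; rfl
    _ = (LinearMap.mul' K H)
          (TensorProduct.map f (Algebra.linearMap K H) (x ⊗ₜ (1 : K))) := by
        rw [LinearMap.comp_apply, Coalgebra.lTensor_counit_comul]
    _ = f x := by simp

lemma conv_assoc (f g h : H →ₗ[K] H) : conv (conv f g) h = conv f (conv g h) := by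
  have key : (LinearMap.mul' K H) ∘ₗ
        TensorProduct.map (LinearMap.mul' K H ∘ₗ TensorProduct.map f g) h
      = ((LinearMap.mul' K H) ∘ₗ
          TensorProduct.map f (LinearMap.mul' K H ∘ₗ TensorProduct.map g h)) ∘ₗ
        (TensorProduct.assoc K H H H).toLinearMap := by
    apply TensorProduct.ext_threefold
    intro a b c
    simp [mul_assoc]
  ext x
  calc conv (conv f g) h x
      = ((LinearMap.mul' K H) ∘ₗ
          TensorProduct.map (LinearMap.mul' K H ∘ₗ TensorProduct.map f g) h)
          ((Coalgebra.comul (R := K)).rTensor H (Coalgebra.comul x)) := by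
        rw [LinearMap.comp_apply, ← LinearMap.comp_apply (TensorProduct.map _ h),
          LinearMap.map_comp_rTensor]
        rfl
    _ = ((LinearMap.mul' K H) ∘ₗ
          TensorProduct.map f (LinearMap.mul' K H ∘ₗ TensorProduct.map g h))
          ((TensorProduct.assoc K H H H)
            ((Coalgebra.comul (R := K)).rTensor H (Coalgebra.comul x))) := by
        rw [key]; rfl
    _ = ((LinearMap.mul' K H) ∘ₗ
          TensorProduct.map f (LinearMap.mul' K H ∘ₗ TensorProduct.map g h))
          ((Coalgebra.comul (R := K)).lTensor H (Coalgebra.comul x)) := by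
        rw [Coalgebra.coassoc_apply]
    _ = conv f (conv g h) x := by
        rw [LinearMap.comp_apply, ← LinearMap.comp_apply (TensorProduct.map f _),
          LinearMap.map_comp_lTensor]
        rfl

lemma conv_antipode_comp (φ : H →ₗ[K] H)
    (hcom : ∀ x : H, Coalgebra.comul (R := K) (φ x) = TensorProduct.map φ φ (Coalgebra.comul x))
    (hcou : ∀ x : H, Coalgebra.counit (R := K) (φ x) = Coalgebra.counit (R := K) x) :
    conv ((HopfAlgebra.antipode (R := K) (A := H)) ∘ₗ φ) φ = eL := by
  ext x
  calc conv ((HopfAlgebra.antipode (R := K) (A := H)) ∘ₗ φ) φ x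
      = (LinearMap.mul' K H)
          (((HopfAlgebra.antipode (R := K) (A := H)).rTensor H ∘ₗ
            TensorProduct.map φ φ) (Coalgebra.comul x)) := by
        rw [LinearMap.rTensor_comp_map]; rfl
    _ = (LinearMap.mul' K H)
          ((HopfAlgebra.antipode (R := K) (A := H)).rTensor H
            (Coalgebra.comul (R := K) (φ x))) := by rw [LinearMap.comp_apply, hcom]
    _ = algebraMap K H (Coalgebra.counit (R := K) (φ x)) :=
        HopfAlgebra.mul_antipode_rTensor_comul_apply _
    _ = eL x := by rw [hcou]; rfl

lemma phi_eq_eL (φ : H →ₗ[K] H)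
    (hφ : conv φ φ = φ)
    (hcom : ∀ x : H, Coalgebra.comul (R := K) (φ x) = TensorProduct.map φ φ (Coalgebra.comul x))
    (hcou : ∀ x : H, Coalgebra.counit (R := K) (φ x) = Coalgebra.counit (R := K) x) :
    φ = eL := by
  have h1 := conv_antipode_comp φ hcom hcou
  calc φ = conv eL φ := (eL_conv φ).symm
    _ = conv (conv ((HopfAlgebra.antipode (R := K) (A := H)) ∘ₗ φ) φ) φ := by rw [h1]
    _ = conv ((HopfAlgebra.antipode (R := K) (A := H)) ∘ₗ φ) (conv φ φ) := conv_assoc _ _ _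
    _ = conv ((HopfAlgebra.antipode (R := K) (A := H)) ∘ₗ φ) φ := by rw [hφ]
    _ = eL := h1

end PostHopfAux

/-- A right Post-Hopf structure on a Hopf algebra `H`: `r x y = x ⊳ y`. -/
structure IsRightPostHopf (K H : Type*) [Field K] [Ring H] [HopfAlgebra K H]
    (r : H →ₗ[K] H →ₗ[K] H) : Prop where
  /-- `⊳` is compatible with the counit. -/
  counit_r : ∀ x y : H,
    Coalgebra.counit (R := K) (r x y)
      = Coalgebra.counit (R := K) x * Coalgebra.counit (R := K) y
  /-- `⊳` is a coalgebra morphism: `Δ(x ⊳ y) = Δ(x) ⊳ Δ(y)` componentwise. -/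
  comul_r : ∀ x y : H,
    Coalgebra.comul (R := K) (r x y)
      = TensorProduct.map₂ r r (Coalgebra.comul x) (Coalgebra.comul y)
  /-- `(x·y) ⊳ z = Σ (x ⊳ z⁽¹⁾)·(y ⊳ z⁽²⁾)`. -/
  mul_r : ∀ x y z : H,
    r (x * y) z
      = TensorProduct.lift ((LinearMap.mul K H).compl₁₂ (r x) (r y)) (Coalgebra.comul z)
  /-- `(x ⊳ y) ⊳ z = x ⊳ (Σ (y ⊳ z⁽¹⁾)·z⁽²⁾)`. -/
  r_r : ∀ x y z : H,
    r (r x y) z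
      = r x (TensorProduct.lift
          ((LinearMap.mul K H).compl₁₂ (r y) LinearMap.id) (Coalgebra.comul z))
  /-- The right multiplication `γ(z)(y) = y ⊳ z` is convolution invertible. -/
  conv_inv : ∃ β : H →ₗ[K] H →ₗ[K] H, ∀ x : H,
    TensorProduct.lift ((LinearMap.llcomp K H H H).compl₁₂ r.flip β) (Coalgebra.comul x)
        = Coalgebra.counit (R := K) x • (LinearMap.id : H →ₗ[K] H)
    ∧ TensorProduct.lift ((LinearMap.llcomp K H H H).compl₁₂ β r.flip) (Coalgebra.comul x)
        = Coalgebra.counit (R := K) x • (LinearMap.id : H →ₗ[K] H)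


theorem statement1 {K : Type*} [Field K] [CharZero K]
    {H : Type*} [Ring H] [HopfAlgebra K H]
    (r : H →ₗ[K] H →ₗ[K] H) (hr : IsRightPostHopf K H r) :
    ∀ x : H, r x 1 = x ∧ r 1 x = (Coalgebra.counit (R := K) x) • (1 : H) := by
  have hcomul1 : Coalgebra.comul (R := K) (1 : H) = (1 : H) ⊗ₜ[K] (1 : H) := by
    rw [Bialgebra.comul_one, Algebra.TensorProduct.one_def]
  -- Part 2 first: `1 ⊳ x = ε(x) • 1`.
  have hφ : r 1 = PostHopfAux.eL (K := K) (H := H) := by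
    apply PostHopfAux.phi_eq_eL
    · ext x
      rw [PostHopfAux.conv_apply, ← hr.mul_r 1 1 x, one_mul]
    · intro x
      rw [hr.comul_r 1 x, hcomul1, TensorProduct.map₂_apply_tmul]
    · intro x
      rw [hr.counit_r 1 x, Bialgebra.counit_one, one_mul]
  have h1x : ∀ x : H, r 1 x = (Coalgebra.counit (R := K) x) • (1 : H) := fun x => by
    rw [hφ, PostHopfAux.eL_apply]
  -- `1 ⊳ 1 = 1`.
  have h11 : r (1 : H) 1 = 1 := by
    rw [h1x 1, Bialgebra.counit_one, one_smul]
  -- `(x ⊳ 1) ⊳ 1 = x ⊳ 1`.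
  have hT : ∀ x : H, r (r x 1) 1 = r x 1 := fun x => by
    have := hr.r_r x 1 1
    rw [hcomul1, TensorProduct.lift.tmul] at this
    simpa [h11] using this
  -- convolution invertibility at `1` gives a left inverse of `y ↦ y ⊳ 1`.
  obtain ⟨β, hβ⟩ := hr.conv_inv
  have hβ1 : ∀ y : H, β 1 (r y 1) = y := by
    have h := (hβ 1).2
    rw [hcomul1, TensorProduct.lift.tmul, Bialgebra.counit_one, one_smul] at h
    intro y
    have := LinearMap.congr_fun h y
    simpa using this
  intro x
  refine ⟨?_, h1x x⟩
  have h1 : β 1 (r (r x 1) 1) = r x 1 := hβ1 (r x 1)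
  rw [hT x, hβ1 x] at h1
  exact h1.symm
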